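/- (One-step expected contraction of the Randomized Kaczmarz update.) Let X ∈ ℂ^{m×n} be nonzero with no zero rows, suppose X β⋆ = y, and let β ∈ ℂ^n satisfy β − β⋆ ∈ range(X*). For each i ∈ {1,…,m} define β(i) := β + ((y_i − X^i β)/‖X^i‖²)(X^i)*. Then Σ_{i=1}^{m} (‖X^i‖²/‖X‖_F²) ‖β(i) − β⋆‖² ≤ α_X ‖β − β⋆‖², where α_X := 1 − σ_min(X)²/‖X‖_F² and σ_min(X) is the smallest nonzero singular value of X. -/

import Mathlib

open Matrix Finset

noncomputable section

/-- Squared Euclidean norm of a complex vector. -/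
def vnsq {n : ℕ} (x : Fin n → ℂ) : ℝ := ∑ i, ‖x i‖ ^ 2

/-- Squared Frobenius norm of a complex matrix. -/
def froSq {m n : ℕ} (A : Matrix (Fin m) (Fin n) ℂ) : ℝ := ∑ i, vnsq (A i)

/-- Square of the smallest nonzero singular value of `A`: the infimum of `‖A x‖²`
over unit vectors `x` in the row space of `A`. -/
def sMinSq {m n : ℕ} (A : Matrix (Fin m) (Fin n) ℂ) : ℝ :=
  sInf {r : ℝ | ∃ u : Fin m → ℂ, vnsq (Aᴴ.mulVec u) = 1 ∧ r = vnsq (A.mulVec (Aᴴ.mulVec u))}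

/-- `α_A := 1 - σ_min(A)²/‖A‖_F²`. -/
def alphaOf {m n : ℕ} (A : Matrix (Fin m) (Fin n) ℂ) : ℝ := 1 - sMinSq A / froSq A

lemma vnsq_nonneg {n : ℕ} (x : Fin n → ℂ) : 0 ≤ vnsq x :=
  Finset.sum_nonneg fun _ _ => sq_nonneg _

lemma vnsq_eq_zero {n : ℕ} {x : Fin n → ℂ} (h : vnsq x = 0) : x = 0 := by
  funext j
  have := (Finset.sum_eq_zero_iff_of_nonneg (fun i _ => sq_nonneg ‖x i‖)).mp h j (mem_univ j)
  simpa using this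

lemma vnsq_smul {n : ℕ} (c : ℂ) (x : Fin n → ℂ) : vnsq (c • x) = ‖c‖^2 * vnsq x := by
  simp [vnsq, mul_pow, Finset.mul_sum]

lemma expand {n : ℕ} (v x : Fin n → ℂ) (hN : vnsq x ≠ 0) :
    vnsq (fun j => v j - (∑ k, x k * v k) / (vnsq x : ℂ) * star (x j))
      = vnsq v - ‖∑ k, x k * v k‖^2 / vnsq x := by
  set r : ℂ := ∑ k, x k * v k with hr
  set N : ℝ := vnsq x with hNdef
  set c : ℂ := r / (N:ℂ) with hc
  have h1 : vnsq (fun j => v j - c * star (x j))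
      = vnsq v + ∑ j, Complex.normSq (c * star (x j))
        - ∑ j, 2 * (v j * starRingEnd ℂ (c * star (x j))).re := by
    simp only [vnsq, Complex.sq_norm, Complex.normSq_sub,
      Finset.sum_add_distrib, Finset.sum_sub_distrib]
  have h2 : ∑ j, Complex.normSq (c * star (x j)) = Complex.normSq c * N := by
    simp only [Complex.normSq_mul, ← Finset.mul_sum]
    congr 1
    rw [hNdef]
    simp only [vnsq, Complex.normSq_conj, Complex.normSq_eq_norm_sq]
    simp [norm_star]
  have h3 : ∑ j, 2 * (v j * starRingEnd ℂ (c * star (x j))).re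
      = 2 * ((starRingEnd ℂ c) * r).re := by
    rw [← Finset.mul_sum, ← Complex.re_sum, hr, Finset.mul_sum]
    congr 2
    apply Finset.sum_congr rfl
    intro j _
    simp only [_root_.map_mul, RingHomCompTriple.comp_apply]
    simp only [RCLike.star_def, Complex.conj_conj]
    ring
  have h4 : (starRingEnd ℂ c * r).re = Complex.normSq r / N := by
    rw [hc, map_div₀, Complex.conj_ofReal, div_mul_eq_mul_div, mul_comm, Complex.mul_conj,
      ← Complex.ofReal_div, Complex.ofReal_re]
  have h5 : Complex.normSq c = Complex.normSq r / (N * N) := by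
    rw [hc, Complex.normSq_div, Complex.normSq_ofReal]
  have h6 : ‖r‖^2 = Complex.normSq r := by
    rw [Complex.sq_norm]
  rw [h1, h2, h3, h4, h5, h6]
  field_simp
  ring

lemma vnsq_pos {n : ℕ} {x : Fin n → ℂ} (h : x ≠ 0) : 0 < vnsq x := by
  rcases (vnsq_nonneg x).lt_or_eq with h1 | h1
  · exact h1
  · exact absurd (vnsq_eq_zero h1.symm) h

lemma froSq_pos {m n : ℕ} {X : Matrix (Fin m) (Fin n) ℂ} (hX : X ≠ 0) : 0 < froSq X := by
  obtain ⟨i, hi⟩ := Function.ne_iff.mp hX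
  have h1 : 0 < vnsq (X i) := vnsq_pos hi
  have h2 : vnsq (X i) ≤ froSq X :=
    Finset.single_le_sum (fun j _ => vnsq_nonneg (X j)) (mem_univ i)
  linarith

lemma key_ineq {m n : ℕ} (X : Matrix (Fin m) (Fin n) ℂ) (u : Fin m → ℂ) :
    sMinSq X * vnsq (Xᴴ.mulVec u) ≤ vnsq (X.mulVec (Xᴴ.mulVec u)) := by
  by_cases h : vnsq (Xᴴ.mulVec u) = 0
  · rw [h, mul_zero]
    exact vnsq_nonneg _
  · have ht : 0 < vnsq (Xᴴ.mulVec u) := (vnsq_nonneg _).lt_of_ne (Ne.symm h)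
    set t : ℝ := vnsq (Xᴴ.mulVec u) with hT
    set s : ℝ := Real.sqrt t with hs
    have hspos : 0 < s := Real.sqrt_pos.mpr ht
    have hs2 : s ^ 2 = t := Real.sq_sqrt ht.le
    have hnorm : ‖((s : ℂ))⁻¹‖ ^ 2 = t⁻¹ := by
      rw [norm_inv, Complex.norm_real, Real.norm_eq_abs, abs_of_pos hspos, inv_pow, hs2]
    have hbdd : BddBelow {r : ℝ | ∃ w : Fin m → ℂ,
        vnsq (Xᴴ.mulVec w) = 1 ∧ r = vnsq (X.mulVec (Xᴴ.mulVec w))} := by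
      refine ⟨0, fun r hr => ?_⟩
      obtain ⟨w, _, hw⟩ := hr
      rw [hw]; exact vnsq_nonneg _
    have hmem : vnsq (X.mulVec (Xᴴ.mulVec u)) / t ∈ {r : ℝ | ∃ w : Fin m → ℂ,
        vnsq (Xᴴ.mulVec w) = 1 ∧ r = vnsq (X.mulVec (Xᴴ.mulVec w))} := by
      refine ⟨((s : ℂ))⁻¹ • u, ?_, ?_⟩
      · rw [Matrix.mulVec_smul, vnsq_smul, hnorm, ← hT]
        field_simp
      · rw [Matrix.mulVec_smul, Matrix.mulVec_smul, vnsq_smul, hnorm]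
        rw [div_eq_inv_mul]
    have hle : sMinSq X ≤ vnsq (X.mulVec (Xᴴ.mulVec u)) / t := csInf_le hbdd hmem
    calc sMinSq X * t ≤ (vnsq (X.mulVec (Xᴴ.mulVec u)) / t) * t :=
          mul_le_mul_of_nonneg_right hle ht.le
      _ = vnsq (X.mulVec (Xᴴ.mulVec u)) := by field_simp

/-- **One-step expected contraction of the Randomized Kaczmarz update.**
If `X β⋆ = y`, `β − β⋆ ∈ range(Xᴴ)`, and `β(i)` is the RK update of `β` using row `i`,
then the expectation over a row `i` drawn with probability `‖X^i‖²/‖X‖_F²` of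
`‖β(i) − β⋆‖²` is at most `α_X ‖β − β⋆‖²`. -/
theorem rk_one_step_contraction
    (m n : ℕ) (X : Matrix (Fin m) (Fin n) ℂ)
    (hX : X ≠ 0) (hrows : ∀ i, X i ≠ 0)
    (βs : Fin n → ℂ) (y : Fin m → ℂ) (hy : X.mulVec βs = y)
    (β : Fin n → ℂ)
    (hrange : ∃ u : Fin m → ℂ, Xᴴ.mulVec u = β - βs)  -- β − β⋆ ∈ range(Xᴴ)
    (βi : Fin m → Fin n → ℂ)
    (hβi : ∀ i, βi i = fun j =>
      β j + (y i - X.mulVec β i) / (vnsq (X i) : ℂ) * star (X i j)) :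
    ∑ i, (vnsq (X i) / froSq X) * vnsq (βi i - βs) ≤ alphaOf X * vnsq (β - βs) := by
  have hF : 0 < froSq X := froSq_pos hX
  have hNi : ∀ i, 0 < vnsq (X i) := fun i => vnsq_pos (hrows i)
  set e : Fin n → ℂ := β - βs with he
  have hXe : ∀ i, (∑ k, X i k * e k) = X.mulVec β i - y i := by
    intro i
    rw [← hy]
    simp [Matrix.mulVec, dotProduct, he, mul_sub, Finset.sum_sub_distrib]
  have hterm : ∀ i, vnsq (βi i - βs)
      = vnsq e - ‖∑ k, X i k * e k‖ ^ 2 / vnsq (X i) := by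
    intro i
    have hfun : (βi i - βs)
        = fun j => e j - (∑ k, X i k * e k) / (vnsq (X i) : ℂ) * star (X i j) := by
      funext j
      simp only [Pi.sub_apply, hβi i]
      rw [hXe i]
      simp only [he, Pi.sub_apply]
      ring
    rw [hfun, expand e (X i) (hNi i).ne']
  have hsumXe : ∑ i, ‖∑ k, X i k * e k‖ ^ 2 = vnsq (X.mulVec e) := by
    simp [vnsq, Matrix.mulVec, dotProduct]
  have hsum : ∑ i, (vnsq (X i) / froSq X) * vnsq (βi i - βs)
      = vnsq e - vnsq (X.mulVec e) / froSq X := by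
    have step : ∀ i, (vnsq (X i) / froSq X) * vnsq (βi i - βs)
        = (vnsq (X i) / froSq X) * vnsq e - ‖∑ k, X i k * e k‖ ^ 2 / froSq X := by
      intro i
      rw [hterm i, mul_sub]
      congr 1
      rw [div_mul_div_comm, mul_comm (vnsq (X i)), mul_div_mul_right _ _ (hNi i).ne']
    rw [Finset.sum_congr rfl fun i _ => step i, Finset.sum_sub_distrib,
      ← Finset.sum_mul, ← Finset.sum_div, ← Finset.sum_div, hsumXe, ← froSq,
      div_self hF.ne', one_mul]
  rw [hsum, alphaOf, sub_mul, one_mul]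
  obtain ⟨u, hu⟩ := hrange
  have hk := key_ineq X u
  rw [hu] at hk
  have h2 : sMinSq X / froSq X * vnsq e ≤ vnsq (X.mulVec e) / froSq X := by
    rw [div_mul_eq_mul_div]
    exact (div_le_div_iff_of_pos_right hF).mpr hk
  linarith
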